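/- (Ideal membership via Gröbner bases, commutative power series case.) Let k be a finite field, R = k[[x_1, …, x_n]], and let ⪯ be an additive total order on ℕⁿ. Let I be a nonzero ideal of R with Gröbner basis G = (g_1, …, g_s), and let f ∈ R be arbitrary. Then f ∈ I if and only if the remainder of f on division by G is zero, i.e. if and only if f can be written as f = q_1 g_1 + ⋯ + q_s g_s with supp(q_i) + LM(g_i) ⊆ Δ_{G,i} for all 1 ≤ i ≤ s. -/

import Mathlib

/-- The support of a multivariate power series: the set of exponents with nonzero
coefficient. -/
def psupp {n : ℕ} {k : Type*} [Semiring k] (f : MvPowerSeries (Fin n) k) :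
    Set (Fin n →₀ ℕ) :=
  {α | MvPowerSeries.coeff α f ≠ 0}

/-- `IsLM le f μ` says that `μ` is the least monomial `LM(f)` of `f` with respect to the
order `le`: `μ` lies in the support of `f` and is `le`-smaller than every element of the
support.  (In particular this forces `f ≠ 0`.) -/
def IsLM {n : ℕ} {k : Type*} [Semiring k] (le : (Fin n →₀ ℕ) → (Fin n →₀ ℕ) → Prop)
    (f : MvPowerSeries (Fin n) k) (μ : Fin n →₀ ℕ) : Prop :=
  μ ∈ psupp f ∧ ∀ ν ∈ psupp f, le μ ν

/-- `le` is an additive total order on `ℕⁿ`: a total order such that `0 ⪯ α` for all `α`,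
and `α ⪯ β` implies `α + γ ⪯ β + γ`.  (Every such order is a well-order.) -/
structure IsAdditiveTotalOrder {n : ℕ} (le : (Fin n →₀ ℕ) → (Fin n →₀ ℕ) → Prop) : Prop where
  total : ∀ α β, le α β ∨ le β α
  antisymm : ∀ α β, le α β → le β α → α = β
  trans : ∀ α β γ, le α β → le β γ → le α γ
  zero_le : ∀ α, le 0 α
  add_right : ∀ α β γ, le α β → le (α + γ) (β + γ)

/-- Membership in `Δ_{F,r} = (LM(f_r) + ℕⁿ) ∖ ⋃_{i<r} Δ_{F,i}`, where `μ i = LM(f_i)`.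
(Unwinding the recursion, `Δ_{F,r} = (μ r + ℕⁿ) ∖ ⋃_{i<r} (μ i + ℕⁿ)`.) -/
def InDelta {n s : ℕ} (μ : Fin s → (Fin n →₀ ℕ)) (r : Fin s) (β : Fin n →₀ ℕ) : Prop :=
  (∃ γ, β = μ r + γ) ∧ ∀ i : Fin s, i < r → ¬ ∃ γ, β = μ i + γ

/-- Membership in `Δ̄_F = ℕⁿ ∖ ⋃_{i=1}^s Δ_{F,i} = ℕⁿ ∖ ⋃_{i=1}^s (μ i + ℕⁿ)`. -/
def InDeltaBar {n s : ℕ} (μ : Fin s → (Fin n →₀ ℕ)) (β : Fin n →₀ ℕ) : Prop :=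
  ∀ i : Fin s, ¬ ∃ γ, β = μ i + γ

/-- `LM(I)`: the set of least monomials of nonzero elements of an ideal `I`. -/
def LMset {n : ℕ} {k : Type*} [Semiring k] (le : (Fin n →₀ ℕ) → (Fin n →₀ ℕ) → Prop)
    (I : Ideal (MvPowerSeries (Fin n) k)) : Set (Fin n →₀ ℕ) :=
  {μ | ∃ f ∈ I, IsLM le f μ}

/-! The division theorem writes `f = ∑ q_i g_i + r` with the support of `r` in `Δ̄`: the
coefficients of the `q_i` are found one exponent at a time by well-founded recursion along `⪯`,
because on `Δ_i` the coefficient of `∑ q_j g_j` at `α + LM(g_i)` is `q_i(α) · lc(g_i)` plus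
contributions of coefficients at strictly smaller exponents. If `f ∈ I` then also `r ∈ I`, and a
nonzero `r` would have its least monomial in `LM(I) = ⋃ (LM(g_i) + ℕⁿ)`, that is, outside `Δ̄`. -/

theorem WellFounded.exists_eq_of_local {α β : Type*} [Nonempty β] {r : α → α → Prop}
    (hr : WellFounded r) (A : (α → β) → α → β)
    (hA : ∀ c c' x, (∀ y, r y x → c y = c' y) → A c x = A c' x) :
    ∃ c : α → β, ∀ x, c x = A c x := by
  classical
  let extend (x : α) (rec : ∀ y, r y x → β) (y : α) : β :=
    if h : r y x then rec y h else Classical.arbitrary β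
  refine ⟨hr.fix fun x rec => A (extend x rec) x, fun x => ?_⟩
  rw [hr.fix_eq]
  exact hA _ _ x fun y hy => by simp only [extend, dif_pos hy]

namespace IsAdditiveTotalOrder

variable {n : ℕ} {le : (Fin n →₀ ℕ) → (Fin n →₀ ℕ) → Prop} (hle : IsAdditiveTotalOrder le)
include hle

theorem refl (a : Fin n →₀ ℕ) : le a a :=
  (hle.total a a).elim id id

theorem rel_of_le {a b : Fin n →₀ ℕ} (h : a ≤ b) : le a b := by
  obtain ⟨c, rfl⟩ := le_iff_exists_add.mp h
  simpa [add_comm] using hle.add_right 0 c a (hle.zero_le c)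

theorem wellFounded : WellFounded fun a b : Fin n →₀ ℕ => le a b ∧ a ≠ b := by
  have : IsPreorder _ le := { refl := hle.refl, trans := hle.trans }
  have hwqo : WellQuasiOrdered le := fun f => by
    obtain ⟨i, j, hij, h⟩ := wellQuasiOrdered_le f
    exact ⟨i, j, hij, hle.rel_of_le h⟩
  exact hwqo.wellFounded.mono fun a b h => ⟨h.1, fun hba => h.2 (hle.antisymm a b h.1 hba)⟩

theorem exists_isLM {k : Type*} [Semiring k] {f : MvPowerSeries (Fin n) k} (hf : f ≠ 0) :
    ∃ μ, IsLM le f μ := by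
  have hne : (psupp f).Nonempty := by
    by_contra h
    exact hf (MvPowerSeries.ext fun β => by_contra fun hβ => h ⟨β, hβ⟩)
  obtain ⟨μ, hμ, hmin⟩ := hle.wellFounded.has_min _ hne
  refine ⟨μ, hμ, fun ν hν => ?_⟩
  by_cases hνμ : ν = μ
  · exact hνμ ▸ hle.refl ν
  · exact (hle.total μ ν).resolve_right fun h => hmin ν hν ⟨h, hνμ⟩

end IsAdditiveTotalOrder

section Division

open MvPowerSeries Finset.HasAntidiagonal

variable {n s : ℕ} {k : Type*} {le : (Fin n →₀ ℕ) → (Fin n →₀ ℕ) → Prop}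

theorem InDelta.unique {μ : Fin s → (Fin n →₀ ℕ)} {i j : Fin s} {β : Fin n →₀ ℕ}
    (hi : InDelta μ i β) (hj : InDelta μ j β) : i = j := by
  by_contra hne
  rcases lt_or_gt_of_ne hne with h | h
  · exact hj.2 i h hi.1
  · exact hi.2 j h hj.1

theorem exists_inDelta_of_not_inDeltaBar {μ : Fin s → (Fin n →₀ ℕ)} {β : Fin n →₀ ℕ}
    (hβ : ¬ InDeltaBar μ β) : ∃ i, InDelta μ i β := by
  simp only [InDeltaBar, not_forall, not_not] at hβ
  obtain ⟨i, hi, hmin⟩ := wellFounded_lt.has_min {i | ∃ γ, β = μ i + γ} hβ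
  exact ⟨i, hi, fun j hji hj => hmin j hj hji⟩

theorem IsLM.add_le_of_mem_antidiagonal [Semiring k] {g : MvPowerSeries (Fin n) k} {μ β : Fin n →₀ ℕ}
    (hle : IsAdditiveTotalOrder le) (hg : IsLM le g μ) {p : (Fin n →₀ ℕ) × (Fin n →₀ ℕ)}
    (hp : p ∈ antidiagonal β) (hp₂ : coeff p.2 g ≠ 0) : le (p.1 + μ) β := by
  rw [mem_antidiagonal] at hp
  simpa [← hp, add_comm] using hle.add_right _ _ p.1 (hg.2 p.2 hp₂)

theorem coeff_mul_eq_zero_of_isLM [Semiring k] {g h : MvPowerSeries (Fin n) k} {μ β : Fin n →₀ ℕ}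
    (hle : IsAdditiveTotalOrder le) (hg : IsLM le g μ)
    (hh : ∀ a, le (a + μ) β → coeff a h = 0) :
    coeff β (h * g) = 0 := by
  classical
  rw [coeff_mul]
  refine Finset.sum_eq_zero fun p hp => ?_
  by_cases hp₂ : coeff p.2 g = 0
  · rw [hp₂, mul_zero]
  · rw [hh p.1 (hg.add_le_of_mem_antidiagonal hle hp hp₂), zero_mul]

theorem coeff_add_mul_of_isLM [Semiring k] {g h : MvPowerSeries (Fin n) k} {μ α : Fin n →₀ ℕ}
    (hle : IsAdditiveTotalOrder le) (hg : IsLM le g μ)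
    (hh : ∀ a, le (a + μ) (α + μ) → a ≠ α → coeff a h = 0) :
    coeff (α + μ) (h * g) = coeff α h * coeff μ g := by
  classical
  rw [coeff_mul, Finset.sum_eq_single (α, μ)]
  · intro p hp hpαμ
    by_cases hp₂ : coeff p.2 g = 0
    · rw [hp₂, mul_zero]
    have hp₁ : p.1 ≠ α := fun hp₁ => hpαμ <| Prod.ext hp₁ <|
      add_left_cancel ((mem_antidiagonal.mp hp).trans (by rw [hp₁, add_comm]))
    rw [hh p.1 (hg.add_le_of_mem_antidiagonal hle hp hp₂) hp₁, zero_mul]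
  · simp

open Classical in
noncomputable def deltaQuotients [Zero k] (μ : Fin s → (Fin n →₀ ℕ))
    (c : Fin s × (Fin n →₀ ℕ) → k) (i : Fin s) : MvPowerSeries (Fin n) k :=
  fun α => if InDelta μ i (α + μ i) then c (i, α) else 0

open Classical in
theorem coeff_deltaQuotients [Semiring k] (μ : Fin s → (Fin n →₀ ℕ))
    (c : Fin s × (Fin n →₀ ℕ) → k) (i : Fin s) (α : Fin n →₀ ℕ) :
    coeff α (deltaQuotients μ c i) = if InDelta μ i (α + μ i) then c (i, α) else 0 :=
  rfl

theorem InDelta.of_mem_psupp_deltaQuotients [Semiring k] {μ : Fin s → (Fin n →₀ ℕ)}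
    {c : Fin s × (Fin n →₀ ℕ) → k} {i : Fin s} {α : Fin n →₀ ℕ}
    (hα : α ∈ psupp (deltaQuotients μ c i)) : InDelta μ i (α + μ i) := by
  by_contra h
  exact hα (by rw [coeff_deltaQuotients, if_neg h])

theorem deltaQuotients_sub [Ring k] (μ : Fin s → (Fin n →₀ ℕ))
    (c c' : Fin s × (Fin n →₀ ℕ) → k) (i : Fin s) :
    deltaQuotients μ (c - c') i = deltaQuotients μ c i - deltaQuotients μ c' i := by
  ext α
  simp only [coeff_deltaQuotients, map_sub, Pi.sub_apply]
  split_ifs <;> simp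

theorem coeff_sum_deltaQuotients_mul [Semiring k] (hle : IsAdditiveTotalOrder le)
    {g : Fin s → MvPowerSeries (Fin n) k} {μ : Fin s → (Fin n →₀ ℕ)}
    (hμ : ∀ i, IsLM le (g i) (μ i)) {c : Fin s × (Fin n →₀ ℕ) → k} {i : Fin s}
    {α : Fin n →₀ ℕ} (hi : InDelta μ i (α + μ i))
    (hc : ∀ j a, le (a + μ j) (α + μ i) → a + μ j ≠ α + μ i → c (j, a) = 0) :
    coeff (α + μ i) (∑ j, deltaQuotients μ c j * g j) = c (i, α) * coeff (μ i) (g i) := by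
  rw [map_sum, Finset.sum_eq_single i]
  · rw [coeff_add_mul_of_isLM hle (hμ i), coeff_deltaQuotients, if_pos hi]
    intro a ha haα
    rw [coeff_deltaQuotients, hc i a ha (by simpa using haα), ite_self]
  · intro j _ hji
    refine coeff_mul_eq_zero_of_isLM hle (hμ j) fun a ha => ?_
    rw [coeff_deltaQuotients]
    split_ifs with hj
    · by_cases heq : a + μ j = α + μ i
      · exact absurd ((heq ▸ hj).unique hi) hji
      · exact hc j a ha heq
    · rfl
  · simp

theorem exists_division [Field k] (hle : IsAdditiveTotalOrder le)
    {g : Fin s → MvPowerSeries (Fin n) k} {μ : Fin s → (Fin n →₀ ℕ)}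
    (hμ : ∀ i, IsLM le (g i) (μ i)) (f : MvPowerSeries (Fin n) k) :
    ∃ q : Fin s → MvPowerSeries (Fin n) k,
      (∀ i, ∀ α ∈ psupp (q i), InDelta μ i (α + μ i)) ∧
        ∀ β ∈ psupp (f - ∑ i, q i * g i), InDeltaBar μ β := by
  classical
  -- `c x = A c x` says that the remainder has coefficient `0` at `x.2 + μ x.1 ∈ Δ_{x.1}`; in
  -- this form `A c x` depends only on the values of `c` strictly below `x`.
  let A (c : Fin s × (Fin n →₀ ℕ) → k) (x : Fin s × (Fin n →₀ ℕ)) : k :=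
    if InDelta μ x.1 (x.2 + μ x.1) then
      (coeff (x.2 + μ x.1) (f - ∑ j, deltaQuotients μ c j * g j) + c x * coeff (μ x.1) (g x.1)) /
        coeff (μ x.1) (g x.1)
    else 0
  have hlocal : ∀ c c' x, (∀ y, (le (y.2 + μ y.1) (x.2 + μ x.1) ∧ y.2 + μ y.1 ≠ x.2 + μ x.1) →
      c y = c' y) → A c x = A c' x := by
    rintro c c' ⟨i, α⟩ hcc'
    simp only [A]
    split_ifs with hi
    · congr 1
      have hdiff := coeff_sum_deltaQuotients_mul hle hμ hi (c := c - c')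
        fun j a h₁ h₂ => sub_eq_zero.mpr (hcc' (j, a) ⟨h₁, h₂⟩)
      simp only [deltaQuotients_sub, sub_mul, Finset.sum_sub_distrib, map_sub, Pi.sub_apply]
        at hdiff ⊢
      linear_combination -hdiff
    · rfl
  obtain ⟨c, hc⟩ := (InvImage.wf (fun x : Fin s × (Fin n →₀ ℕ) => x.2 + μ x.1)
    hle.wellFounded).exists_eq_of_local A hlocal
  refine ⟨deltaQuotients μ c, fun i α => InDelta.of_mem_psupp_deltaQuotients,
    fun β hβ => by_contra fun hβΔ => ?_⟩
  obtain ⟨i, hiβ⟩ := exists_inDelta_of_not_inDeltaBar hβΔ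
  obtain ⟨α, rfl⟩ := hiβ.1
  rw [add_comm] at hβ hiβ
  have hfix := hc (i, α)
  simp only [A, if_pos hiβ] at hfix
  rw [eq_div_iff (hμ i).1] at hfix
  exact hβ (by linear_combination -hfix)

theorem eq_zero_of_forall_inDeltaBar [Semiring k] (hle : IsAdditiveTotalOrder le)
    {I : Ideal (MvPowerSeries (Fin n) k)} {μ : Fin s → (Fin n →₀ ℕ)}
    (hGroebner : LMset le I = ⋃ i : Fin s, {β | ∃ γ, β = μ i + γ})
    {r : MvPowerSeries (Fin n) k} (hr : r ∈ I) (hsupp : ∀ β ∈ psupp r, InDeltaBar μ β) :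
    r = 0 := by
  by_contra hr0
  obtain ⟨m, hm⟩ := hle.exists_isLM hr0
  have hmI : m ∈ LMset le I := ⟨r, hr, hm⟩
  rw [hGroebner, Set.mem_iUnion] at hmI
  obtain ⟨i, hi⟩ := hmI
  exact hsupp m hm.1 i hi

end Division

theorem statement14_general
    {n s : ℕ} {k : Type*} [Field k]
    (le : (Fin n →₀ ℕ) → (Fin n →₀ ℕ) → Prop) (hle : IsAdditiveTotalOrder le)
    (I : Ideal (MvPowerSeries (Fin n) k))
    (g : Fin s → MvPowerSeries (Fin n) k)
    (hgI : ∀ i, g i ∈ I)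
    (μ : Fin s → (Fin n →₀ ℕ)) (hμ : ∀ i, IsLM le (g i) (μ i))
    (hGroebner : LMset le I = ⋃ i : Fin s, {β | ∃ γ, β = μ i + γ})
    (f : MvPowerSeries (Fin n) k) :
    f ∈ I ↔
      ∃ q : Fin s → MvPowerSeries (Fin n) k,
        f = ∑ i, q i * g i ∧ ∀ i, ∀ β ∈ psupp (q i), InDelta μ i (β + μ i) := by
  have sum_mem (q : Fin s → MvPowerSeries (Fin n) k) : ∑ i, q i * g i ∈ I :=
    I.sum_mem fun i _ => I.mul_mem_left _ (hgI i)
  constructor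
  · intro hf
    obtain ⟨q, hq, hrem⟩ := exists_division hle hμ f
    exact ⟨q, sub_eq_zero.mp (eq_zero_of_forall_inDeltaBar hle hGroebner
      (I.sub_mem hf (sum_mem q)) hrem), hq⟩
  · rintro ⟨q, rfl, -⟩
    exact sum_mem q

/-- ideal membership via Gröbner bases, commutative power series case.
Let `k` be a finite field, `R = k[[x_1, …, x_n]]`, `⪯` an additive total order on `ℕⁿ`.
Let `I` be a nonzero ideal of `R` with Gröbner basis `G = (g_1, …, g_s)` (nonzero elements of
`I` generating `I` with `LM(I) = ⋃ᵢ (LM(g_i) + ℕⁿ)`), with `μ i = LM(g_i)`.  Then for any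
`f ∈ R`, `f ∈ I` if and only if the remainder of `f` on division by `G` is zero, i.e. iff `f`
can be written as `f = q_1 g_1 + ⋯ + q_s g_s` with `supp(q_i) + LM(g_i) ⊆ Δ_{G,i}` for
all `i`. -/
theorem statement14
    {n s : ℕ} {k : Type*} [Field k] [Finite k]
    (le : (Fin n →₀ ℕ) → (Fin n →₀ ℕ) → Prop) (hle : IsAdditiveTotalOrder le)
    (I : Ideal (MvPowerSeries (Fin n) k)) (hI : I ≠ ⊥)
    (g : Fin s → MvPowerSeries (Fin n) k)
    (hg0 : ∀ i, g i ≠ 0) (hgI : ∀ i, g i ∈ I)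
    (hgen : Ideal.span (Set.range g) = I)
    (μ : Fin s → (Fin n →₀ ℕ)) (hμ : ∀ i, IsLM le (g i) (μ i))
    (hGroebner : LMset le I = ⋃ i : Fin s, {β | ∃ γ, β = μ i + γ})
    (f : MvPowerSeries (Fin n) k) :
    f ∈ I ↔
      ∃ q : Fin s → MvPowerSeries (Fin n) k,
        f = ∑ i, q i * g i ∧ ∀ i, ∀ β ∈ psupp (q i), InDelta μ i (β + μ i) :=
  statement14_general le hle I g hgI μ hμ hGroebner f
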